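/- Define the colouring χ₃ : ℕ⁺ → {−1, +1} recursively by χ₃(3k+1) = 1, χ₃(3k+2) = −1, and χ₃(3k) = χ₃(k). Then every homogeneous arithmetic progression contained in {0, 1, …, n} has discrepancy O(log n) under χ₃; explicitly, for all positive integers d and k with kd ≤ n, |∑_{j=1}^{k} χ₃(jd)| ≤ (log n)/(log 3) + 1. -/

import Mathlib

/-!
Every `χ₃` of this form is completely multiplicative with values `±1`, so the sum along the
progression `{d, …, kd}` is `χ₃(d)` times the partial sum `S(k) = ∑_{j ≤ k} χ₃(j)`.
Grouping `1, …, k` into blocks `3i+1, 3i+2, 3i+3` gives `S(k) = S(⌊k/3⌋) + [k ≡ 1 mod 3]`,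
so `S(k)` is nonnegative and at most the number of base-3 digits of `k`, i.e. `⌊log₃ k⌋ + 1`.
-/

open Finset

structure IsChi3 (χ : ℕ → ℤ) : Prop where
  three_mul_add_one : ∀ k : ℕ, χ (3 * k + 1) = 1
  three_mul_add_two : ∀ k : ℕ, χ (3 * k + 2) = -1
  three_mul : ∀ k : ℕ, 0 < k → χ (3 * k) = χ k

namespace IsChi3

variable {χ : ℕ → ℤ} (hχ : IsChi3 χ)
include hχ

lemma of_mod_three_eq_one {m : ℕ} (hm : m % 3 = 1) : χ m = 1 := by
  rw [← Nat.div_add_mod m 3, hm]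
  exact hχ.three_mul_add_one _

lemma of_mod_three_eq_two {m : ℕ} (hm : m % 3 = 2) : χ m = -1 := by
  rw [← Nat.div_add_mod m 3, hm]
  exact hχ.three_mul_add_two _

lemma abs_eq_one {m : ℕ} (hm : 0 < m) : |χ m| = 1 := by
  induction m using Nat.strong_induction_on with
  | _ m ih =>
    obtain h | h | h : m % 3 = 0 ∨ m % 3 = 1 ∨ m % 3 = 2 := by omega
    · obtain ⟨q, rfl⟩ : 3 ∣ m := Nat.dvd_of_mod_eq_zero h
      rw [hχ.three_mul q (by omega)]
      exact ih q (by omega) (by omega)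
    · simp [hχ.of_mod_three_eq_one h]
    · simp [hχ.of_mod_three_eq_two h]

lemma map_mul {a b : ℕ} (ha : 0 < a) (hb : 0 < b) : χ (a * b) = χ a * χ b := by
  induction a using Nat.strong_induction_on generalizing b with
  | _ a iha =>
  induction b using Nat.strong_induction_on with
  | _ b ihb =>
    by_cases h3a : 3 ∣ a
    · obtain ⟨q, rfl⟩ := h3a
      have hq : 0 < q := by omega
      rw [mul_assoc, hχ.three_mul _ (Nat.mul_pos hq hb), hχ.three_mul q hq,
        iha q (by omega) hq hb]
    by_cases h3b : 3 ∣ b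
    · obtain ⟨q, rfl⟩ := h3b
      have hq : 0 < q := by omega
      rw [Nat.mul_left_comm, hχ.three_mul _ (Nat.mul_pos ha hq), hχ.three_mul q hq,
        ihb q (by omega) hq]
    -- off multiples of 3, `χ` is the nontrivial character mod 3
    have hab := Nat.mul_mod a b 3
    obtain ha' | ha' : a % 3 = 1 ∨ a % 3 = 2 := by omega
    all_goals obtain hb' | hb' : b % 3 = 1 ∨ b % 3 = 2 := by omega
    all_goals
      simp only [ha', hb'] at hab
      simp [hχ.of_mod_three_eq_one, hχ.of_mod_three_eq_two, ha', hb', hab]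

lemma sum_Icc_eq_sum_Icc_div_three (k : ℕ) :
    ∑ j ∈ Icc 1 k, χ j = ∑ j ∈ Icc 1 (k / 3), χ j + if k % 3 = 1 then 1 else 0 := by
  induction k with
  | zero => simp
  | succ k ih =>
    rw [sum_Icc_succ_top (by omega), ih]
    obtain h | h | h : k % 3 = 0 ∨ k % 3 = 1 ∨ k % 3 = 2 := by omega
    · rw [hχ.of_mod_three_eq_one (by omega), show (k + 1) / 3 = k / 3 by omega]
      simp [h, show (k + 1) % 3 = 1 by omega]
    · rw [hχ.of_mod_three_eq_two (by omega), show (k + 1) / 3 = k / 3 by omega]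
      simp [h, show (k + 1) % 3 = 2 by omega]
    · have hk : k + 1 = 3 * (k / 3 + 1) := by omega
      rw [show (k + 1) / 3 = k / 3 + 1 by omega, sum_Icc_succ_top (by omega), hk,
        hχ.three_mul _ (by omega)]
      simp [h]

lemma sum_Icc_nonneg (k : ℕ) : 0 ≤ ∑ j ∈ Icc 1 k, χ j := by
  induction k using Nat.strong_induction_on with
  | _ k ih =>
    rcases Nat.eq_zero_or_pos k with rfl | hk
    · simp
    rw [hχ.sum_Icc_eq_sum_Icc_div_three]
    have := ih (k / 3) (by omega)
    split_ifs <;> omega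

lemma sum_Icc_le_log (k : ℕ) : ∑ j ∈ Icc 1 k, χ j ≤ Nat.log 3 k + 1 := by
  induction k using Nat.strong_induction_on with
  | _ k ih =>
    have hstep : ∑ j ∈ Icc 1 k, χ j ≤ ∑ j ∈ Icc 1 (k / 3), χ j + 1 := by
      rw [hχ.sum_Icc_eq_sum_Icc_div_three]
      split_ifs <;> omega
    rcases lt_or_ge k 3 with hk | hk
    · have : k / 3 = 0 := by omega
      simp only [this, Icc_eq_empty_of_lt, sum_empty, zero_add, zero_lt_one] at hstep
      omega
    · have := ih (k / 3) (by omega)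
      rw [Nat.log_of_one_lt_of_le (by norm_num) hk]
      push_cast
      omega

end IsChi3

/-- Under the recursive colouring `χ₃` of the positive integers, with `χ₃(3k+1) = 1`,
`χ₃(3k+2) = −1` and `χ₃(3k) = χ₃(k)`, every homogeneous arithmetic progression
`{d, 2d, …, kd}` contained in `{0, 1, …, n}` has discrepancy at most
`log n / log 3 + 1` (in particular, `O(log n)`). -/
theorem hap_discrepancy_log_bound_of_chi3
    (χ : ℕ → ℤ)
    (h1 : ∀ k : ℕ, χ (3 * k + 1) = 1)
    (h2 : ∀ k : ℕ, χ (3 * k + 2) = -1)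
    (h3 : ∀ k : ℕ, 0 < k → χ (3 * k) = χ k) :
    ∀ d k n : ℕ, 0 < d → 0 < k → k * d ≤ n →
      ((|∑ j ∈ Finset.Icc 1 k, χ (j * d)| : ℤ) : ℝ) ≤ Real.log n / Real.log 3 + 1 := by
  intro d k n hd _ hn
  have hχ : IsChi3 χ := ⟨h1, h2, h3⟩
  have hsum : ∑ j ∈ Icc 1 k, χ (j * d) = (∑ j ∈ Icc 1 k, χ j) * χ d := by
    rw [sum_mul]
    exact sum_congr rfl fun j hj => hχ.map_mul (mem_Icc.mp hj).1 hd
  rw [hsum, abs_mul, hχ.abs_eq_one hd, mul_one, abs_of_nonneg (hχ.sum_Icc_nonneg k)]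
  have hkn : k ≤ n := (Nat.le_mul_of_pos_right k hd).trans hn
  have hlog : (Nat.log 3 k : ℝ) ≤ Real.log n / Real.log 3 := calc
    (Nat.log 3 k : ℝ) ≤ Real.logb 3 k := Real.natLog_le_logb k 3
    _ ≤ Real.logb 3 n :=
      Real.logb_le_logb_of_le (by norm_num) (by positivity) (by exact_mod_cast hkn)
    _ = Real.log n / Real.log 3 := (Real.log_div_log).symm
  have hS : ((∑ j ∈ Icc 1 k, χ j : ℤ) : ℝ) ≤ Nat.log 3 k + 1 := by
    exact_mod_cast hχ.sum_Icc_le_log k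
  linarith
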